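/- Without assuming monotonicity, the covariate-adjusted intention-to-treat contrast on the treatment identifies the difference of the complier and defier proportions: Δ0 := E[ℓ1(X) − ℓ0(X)] = P(A1 > A0) − P(A1 < A0). -/

import Mathlib

/-! On the arm `Z = z` write `W₁ = Z`, `W₀ = 1 - Z` for its indicator and `e₁ = e`, `e₀ = 1 - e`
for its propensity. There the observed treatment is `A_z`, so the defining property of `ℓ_z` reads
`E[W_z A_z g(X)] = E[W_z ℓ_z(X) g(X)]`, while unconfoundedness gives
`E[W_z A_z g(X)] = E[e_z(X) A_z g(X)]`. Since `e_z ≥ ε`, test functions may be divided by `e_z`,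
so `ℓ_z(X)` is a version of `E[A_z | X]`. Testing it against `1{ℓ_z > 1} / (1 + |ℓ_z|)`, which is
bounded although `ℓ_z` need not be, shows `0 ≤ ℓ_z(X) ≤ 1` a.e.; hence `E[ℓ_z(X)] = E[A_z]`, and
`E[A₁] - E[A₀] = P(A₁ > A₀) - P(A₁ < A₀)` because `A₁ - A₀ = 1{A₁ > A₀} - 1{A₁ < A₀}`. -/

open MeasureTheory ProbabilityTheory

lemma ite_eq_one_eq_self {t : ℝ} (ht : t = 0 ∨ t = 1) : (if t = 1 then (1 : ℝ) else 0) = t := by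
  rcases ht with rfl | rfl <;> norm_num

lemma ite_eq_zero_eq_one_sub {t : ℝ} (ht : t = 0 ∨ t = 1) :
    (if t = 0 then (1 : ℝ) else 0) = 1 - t := by
  rcases ht with rfl | rfl <;> norm_num

lemma abs_le_one_of_eq_zero_or_eq_one {t : ℝ} (ht : t = 0 ∨ t = 1) : |t| ≤ 1 := by
  rcases ht with rfl | rfl <;> norm_num

lemma mem_Icc_of_eq_zero_or_eq_one {t : ℝ} (ht : t = 0 ∨ t = 1) : t ∈ Set.Icc (0 : ℝ) 1 := by
  rcases ht with rfl | rfl <;> norm_num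

lemma abs_div_le_of_abs_le {a b C ε : ℝ} (hε : 0 < ε) (hb : ε ≤ b) (ha : |a| ≤ C) :
    |a / b| ≤ C / ε := by
  rw [abs_div, abs_of_pos (hε.trans_le hb)]
  exact div_le_div₀ ((abs_nonneg a).trans ha) ha hε hb

lemma abs_indicator_inv_one_add_abs_le {S : Type*} (T : Set S) (f : S → ℝ) (x : S) :
    |T.indicator (fun x => (1 + |f x|)⁻¹) x| ≤ 1 ∧
      |f x * T.indicator (fun x => (1 + |f x|)⁻¹) x| ≤ 1 := by
  have hpos : 0 < 1 + |f x| := by positivity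
  by_cases hx : x ∈ T
  · simp only [Set.indicator_of_mem hx, ← div_eq_mul_inv, abs_div, abs_inv, abs_of_pos hpos]
    exact ⟨inv_le_one_of_one_le₀ (by linarith [abs_nonneg (f x)]),
      (div_le_one hpos).2 (by linarith)⟩
  · simp [hx]

section

variable {Ω S : Type*} [MeasurableSpace Ω] [MeasurableSpace S] {P : Measure Ω} {X : Ω → S}

lemma integrable_of_abs_le [IsFiniteMeasure P] {f : Ω → ℝ} (hf : Measurable f) {C : ℝ}
    (hC : ∀ ω, |f ω| ≤ C) : Integrable f P :=
  .of_bound hf.aestronglyMeasurable C (ae_of_all _ hC)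

/-- `f ∘ X` is a version of `E[F | X]`. As `f` need not be bounded, the test functions `g` are
those for which both `g` and `f * g` are bounded. -/
def IsCondExpVersion (P : Measure Ω) (X : Ω → S) (F : Ω → ℝ) (f : S → ℝ) : Prop :=
  ∀ g : S → ℝ, Measurable g → (∃ C, ∀ x, |g x| ≤ C) → (∃ C, ∀ x, |f x * g x| ≤ C) →
    ∫ ω, F ω * g (X ω) ∂P = ∫ ω, f (X ω) * g (X ω) ∂P

/-- `E[W F | X] = w(X) E[F | X]`, tested against bounded measurable functions of `X`. -/
def Balances (P : Measure Ω) (X : Ω → S) (W : Ω → ℝ) (w : S → ℝ) (F : Ω → ℝ) : Prop :=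
  ∀ g : S → ℝ, Measurable g → (∃ C, ∀ x, |g x| ≤ C) →
    ∫ ω, W ω * F ω * g (X ω) ∂P = ∫ ω, w (X ω) * F ω * g (X ω) ∂P

namespace Balances

variable {W F : Ω → ℝ} {w : S → ℝ}

lemma of_forall_bounded_comp {E : Type*} [MeasurableSpace E] {V : Ω → E}
    (h : ∀ ψ : E → ℝ, Measurable ψ → (∃ C, ∀ v, |ψ v| ≤ C) → Balances P X W w fun ω => ψ (V ω))
    {π : E → ℝ} (hπ : Measurable π) (h01 : ∀ ω, π (V ω) = 0 ∨ π (V ω) = 1) :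
    Balances P X W w fun ω => π (V ω) := by
  have hψ := h (fun v => if π v = 1 then 1 else 0)
    (.ite (hπ (measurableSet_singleton 1)) measurable_const measurable_const)
    ⟨1, fun v => by split_ifs <;> simp⟩
  rwa [show (fun ω => if π (V ω) = 1 then (1 : ℝ) else 0) = fun ω => π (V ω) from
    funext fun ω => ite_eq_one_eq_self (h01 ω)] at hψ

lemma one_sub [IsFiniteMeasure P] (hX : Measurable X) (hW : Measurable W) (hWb : ∀ ω, |W ω| ≤ 1)
    (hw : Measurable w) (hwb : ∀ x, |w x| ≤ 1) (hF : Measurable F) (hFb : ∀ ω, |F ω| ≤ 1)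
    (h : Balances P X W w F) : Balances P X (fun ω => 1 - W ω) (fun x => 1 - w x) F := by
  rintro g hg ⟨C, hC⟩
  have hFg : Integrable (fun ω => F ω * g (X ω)) P :=
    (integrable_of_abs_le (hg.comp hX) fun ω => hC (X ω)).bdd_mul hF.aestronglyMeasurable
      (ae_of_all _ hFb)
  have hWFg := h g hg ⟨C, hC⟩
  simp only [mul_assoc] at hWFg ⊢
  simp only [sub_mul, one_mul]
  rw [integral_sub hFg (hFg.bdd_mul hW.aestronglyMeasurable (ae_of_all _ hWb)),
    integral_sub hFg (hFg.bdd_mul (f := fun ω => w (X ω)) (hw.comp hX).aestronglyMeasurable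
      (ae_of_all _ fun ω => hwb _)),
    hWFg]

lemma isCondExpVersion {f : S → ℝ} (hw : Measurable w) (hfm : Measurable f) {ε : ℝ}
    (hε : 0 < ε) (hwε : ∀ x, ε ≤ w x) (hW : Balances P X W w 1) (hWF : Balances P X W w F)
    (hf : ∀ g : S → ℝ, Measurable g → (∃ C, ∀ x, |g x| ≤ C) →
      ∫ ω, F ω * W ω * g (X ω) ∂P = ∫ ω, f (X ω) * W ω * g (X ω) ∂P) :
    IsCondExpVersion P X F f := by
  rintro g hg ⟨C, hC⟩ ⟨D, hD⟩
  have hw0 : ∀ x, w x ≠ 0 := fun x => (hε.trans_le (hwε x)).ne'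
  have hk : Measurable fun x => g x / w x := hg.div hw
  have hkb : ∃ C, ∀ x, |g x / w x| ≤ C :=
    ⟨C / ε, fun x => abs_div_le_of_abs_le hε (hwε x) (hC x)⟩
  have hfkb : ∃ C, ∀ x, |f x * (g x / w x)| ≤ C :=
    ⟨D / ε, fun x => by rw [← mul_div_assoc]; exact abs_div_le_of_abs_le hε (hwε x) (hD x)⟩
  calc ∫ ω, F ω * g (X ω) ∂P = ∫ ω, w (X ω) * F ω * (g (X ω) / w (X ω)) ∂P := by
        congr 1; ext ω; field_simp [hw0 (X ω)]
    _ = ∫ ω, F ω * W ω * (g (X ω) / w (X ω)) ∂P := by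
        rw [← hWF _ hk hkb]; congr 1; ext ω; ring
    _ = ∫ ω, W ω * (f (X ω) * (g (X ω) / w (X ω))) ∂P := by
        rw [hf _ hk hkb]; congr 1; ext ω; ring
    _ = ∫ ω, w (X ω) * (f (X ω) * (g (X ω) / w (X ω))) ∂P := by
        simpa only [Pi.one_apply, mul_one] using
          hW (fun x => f x * (g x / w x)) (hfm.mul hk) hfkb
    _ = ∫ ω, f (X ω) * g (X ω) ∂P := by
        congr 1; ext ω; field_simp [hw0 (X ω)]

end Balances

namespace IsCondExpVersion

variable {F : Ω → ℝ} {f : S → ℝ}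

lemma neg (h : IsCondExpVersion P X F f) : IsCondExpVersion P X (-F) (-f) := by
  rintro g hg hgb ⟨D, hD⟩
  simp only [Pi.neg_apply, neg_mul, integral_neg]
  rw [h g hg hgb ⟨D, fun x => by simpa [neg_mul, abs_neg] using hD x⟩]

lemma ae_le [IsFiniteMeasure P] (h : IsCondExpVersion P X F f) (hX : Measurable X)
    (hf : Measurable f) (hF : Integrable F P) {b : ℝ} (hFb : ∀ ω, F ω ≤ b) :
    ∀ᵐ ω ∂P, f (X ω) ≤ b := by
  set T := {x | b < f x}
  set g : S → ℝ := T.indicator fun x => (1 + |f x|)⁻¹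
  have hg : Measurable g :=
    (measurable_const.add hf.abs).inv.indicator (measurableSet_lt measurable_const hf)
  have hgb (x : S) := abs_indicator_inv_one_add_abs_le T f x
  have hpos : ∀ ω, X ω ∈ T → 0 < (f (X ω) - F ω) * g (X ω) := fun ω hx => by
    simp only [g, Set.indicator_of_mem hx]
    exact mul_pos (by linarith [hFb ω, show b < f (X ω) from hx]) (by positivity)
  have hnonneg : 0 ≤ fun ω => (f (X ω) - F ω) * g (X ω) := fun ω => by
    by_cases hx : X ω ∈ T
    · exact (hpos ω hx).le
    · simp [g, hx]
  have hFg : Integrable (fun ω => F ω * g (X ω)) P :=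
    hF.mul_bdd (hg.comp hX).aestronglyMeasurable (ae_of_all _ fun ω => (hgb (X ω)).1)
  have hfg : Integrable (fun ω => f (X ω) * g (X ω)) P :=
    integrable_of_abs_le ((hf.mul hg).comp hX) fun ω => (hgb (X ω)).2
  have hint : Integrable (fun ω => (f (X ω) - F ω) * g (X ω)) P := by
    simp only [sub_mul]; exact hfg.sub hFg
  have hzero : ∫ ω, (f (X ω) - F ω) * g (X ω) ∂P = 0 := by
    simp only [sub_mul]
    rw [integral_sub hfg hFg, h g hg ⟨1, fun x => (hgb x).1⟩ ⟨1, fun x => (hgb x).2⟩, sub_self]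
  filter_upwards [(integral_eq_zero_iff_of_nonneg hnonneg hint).1 hzero] with ω hω
  exact not_lt.1 fun hx => (hpos ω hx).ne' hω

lemma ae_mem_Icc [IsFiniteMeasure P] (h : IsCondExpVersion P X F f) (hX : Measurable X)
    (hf : Measurable f) (hF : Measurable F) {a b : ℝ} (hFab : ∀ ω, F ω ∈ Set.Icc a b) :
    ∀ᵐ ω ∂P, f (X ω) ∈ Set.Icc a b := by
  have hFi : Integrable F P :=
    integrable_of_abs_le hF fun ω => abs_le_max_abs_abs (hFab ω).1 (hFab ω).2
  filter_upwards [h.ae_le hX hf hFi fun ω => (hFab ω).2,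
    h.neg.ae_le hX hf.neg hFi.neg fun ω => neg_le_neg (hFab ω).1] with ω hb ha
  exact ⟨neg_le_neg_iff.1 ha, hb⟩

lemma integrable_comp [IsFiniteMeasure P] (h : IsCondExpVersion P X F f) (hX : Measurable X)
    (hf : Measurable f) (hF : Measurable F) {a b : ℝ} (hFab : ∀ ω, F ω ∈ Set.Icc a b) :
    Integrable (fun ω => f (X ω)) P := by
  refine .of_bound (hf.comp hX).aestronglyMeasurable (max |a| |b|) ?_
  filter_upwards [h.ae_mem_Icc hX hf hF hFab] with ω hω
  exact abs_le_max_abs_abs hω.1 hω.2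

lemma integral_comp_eq [IsFiniteMeasure P] (h : IsCondExpVersion P X F f) (hX : Measurable X)
    (hf : Measurable f) (hF : Measurable F) {a b : ℝ} (hFab : ∀ ω, F ω ∈ Set.Icc a b) :
    ∫ ω, f (X ω) ∂P = ∫ ω, F ω ∂P := by
  set g : S → ℝ := (f ⁻¹' Set.Icc a b).indicator 1
  have hgb : ∀ x, |g x| ≤ 1 := fun x => by
    by_cases hx : f x ∈ Set.Icc a b <;> simp [g, hx]
  have hfgb : ∀ x, |f x * g x| ≤ max |a| |b| := fun x => by
    by_cases hx : f x ∈ Set.Icc a b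
    · simpa [g, hx] using abs_le_max_abs_abs hx.1 hx.2
    · simp [g, hx]
  have hg1 : ∀ᵐ ω ∂P, g (X ω) = 1 := by
    filter_upwards [h.ae_mem_Icc hX hf hF hFab] with ω hω
    simp [g, hω]
  calc ∫ ω, f (X ω) ∂P = ∫ ω, f (X ω) * g (X ω) ∂P := by
        refine integral_congr_ae ?_
        filter_upwards [hg1] with ω hω
        rw [hω, mul_one]
    _ = ∫ ω, F ω * g (X ω) ∂P :=
        (h g (measurable_one.indicator (hf measurableSet_Icc)) ⟨1, hgb⟩ ⟨_, hfgb⟩).symm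
    _ = ∫ ω, F ω ∂P := by
        refine integral_congr_ae ?_
        filter_upwards [hg1] with ω hω
        rw [hω, mul_one]

end IsCondExpVersion

lemma integral_sub_eq_measureReal_sub [IsFiniteMeasure P] {A0 A1 : Ω → ℝ} (hA0 : Measurable A0)
    (hA1 : Measurable A1) (hA0_01 : ∀ ω, A0 ω = 0 ∨ A0 ω = 1)
    (hA1_01 : ∀ ω, A1 ω = 0 ∨ A1 ω = 1) :
    ∫ ω, A1 ω ∂P - ∫ ω, A0 ω ∂P
      = P.real {ω | A1 ω = 1 ∧ A0 ω = 0} - P.real {ω | A1 ω = 0 ∧ A0 ω = 1} := by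
  have hC : MeasurableSet {ω | A1 ω = 1 ∧ A0 ω = 0} :=
    (hA1 (measurableSet_singleton 1)).inter (hA0 (measurableSet_singleton 0))
  have hD : MeasurableSet {ω | A1 ω = 0 ∧ A0 ω = 1} :=
    (hA1 (measurableSet_singleton 0)).inter (hA0 (measurableSet_singleton 1))
  rw [← integral_indicator_one hC, ← integral_indicator_one hD,
    ← integral_sub (integrable_of_abs_le hA1 fun ω => abs_le_one_of_eq_zero_or_eq_one (hA1_01 ω))
      (integrable_of_abs_le hA0 fun ω => abs_le_one_of_eq_zero_or_eq_one (hA0_01 ω)),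
    ← integral_sub ((integrable_const 1).indicator hC) ((integrable_const 1).indicator hD)]
  congr 1; ext ω
  rcases hA1_01 ω with h1 | h1 <;> rcases hA0_01 ω with h0 | h0 <;> simp [h1, h0]

end

theorem stmt_3_general
    {Ω : Type*} [MeasurableSpace Ω] (P : Measure Ω) [IsProbabilityMeasure P]
    {S : Type*} [mS : MeasurableSpace S]
    (X : Ω → S) (hX : Measurable X)
    (Z A0 A1 Y0 Y1 : Ω → ℝ)
    (hZ : Measurable Z) (hA0 : Measurable A0) (hA1 : Measurable A1)
    (hZ01 : ∀ ω, Z ω = 0 ∨ Z ω = 1)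
    (hA0_01 : ∀ ω, A0 ω = 0 ∨ A0 ω = 1)
    (hA1_01 : ∀ ω, A1 ω = 0 ∨ A1 ω = 1)
    (A : Ω → ℝ)
    (hA : A = fun ω => (1 - Z ω) * A0 ω + Z ω * A1 ω)
    (e : S → ℝ) (he : Measurable e) (ε : ℝ) (hε : 0 < ε)
    (hebd : ∀ x, ε ≤ e x ∧ e x ≤ 1 - ε)
    (hVe : ∀ g : S → ℝ, Measurable g → (∃ C, ∀ x, |g x| ≤ C) →
      ∫ ω, Z ω * g (X ω) ∂P = ∫ ω, e (X ω) * g (X ω) ∂P)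
    (hUnconf : ∀ ψ : ℝ × ℝ × ℝ × ℝ → ℝ, Measurable ψ → (∃ C, ∀ v, |ψ v| ≤ C) →
      ∀ g : S → ℝ, Measurable g → (∃ C, ∀ x, |g x| ≤ C) →
      ∫ ω, Z ω * ψ (A0 ω, A1 ω, Y0 ω, Y1 ω) * g (X ω) ∂P
        = ∫ ω, e (X ω) * ψ (A0 ω, A1 ω, Y0 ω, Y1 ω) * g (X ω) ∂P)
    (l0 l1 : S → ℝ) (hl0 : Measurable l0) (hl1 : Measurable l1)
    (hl0v : ∀ g : S → ℝ, Measurable g → (∃ C, ∀ x, |g x| ≤ C) →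
      ∫ ω, A ω * (if Z ω = 0 then (1:ℝ) else 0) * g (X ω) ∂P
        = ∫ ω, l0 (X ω) * (if Z ω = 0 then (1:ℝ) else 0) * g (X ω) ∂P)
    (hl1v : ∀ g : S → ℝ, Measurable g → (∃ C, ∀ x, |g x| ≤ C) →
      ∫ ω, A ω * (if Z ω = 1 then (1:ℝ) else 0) * g (X ω) ∂P
        = ∫ ω, l1 (X ω) * (if Z ω = 1 then (1:ℝ) else 0) * g (X ω) ∂P) :
    (∫ ω, (l1 (X ω) - l0 (X ω)) ∂P)
      = (P {ω | A1 ω = 1 ∧ A0 ω = 0}).toReal - (P {ω | A1 ω = 0 ∧ A0 ω = 1}).toReal := by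
  have hZe : Balances P X Z e 1 := fun g hg hgb => by
    simpa only [Pi.one_apply, mul_one] using hVe g hg hgb
  have hZeA1 : Balances P X Z e A1 := .of_forall_bounded_comp hUnconf measurable_snd.fst hA1_01
  have hZeA0 : Balances P X Z e A0 := .of_forall_bounded_comp hUnconf measurable_fst hA0_01
  have hZb (ω : Ω) := abs_le_one_of_eq_zero_or_eq_one (hZ01 ω)
  have hA0b (ω : Ω) := abs_le_one_of_eq_zero_or_eq_one (hA0_01 ω)
  have heb (x : S) : |e x| ≤ 1 := abs_le.2 ⟨by linarith [(hebd x).1], by linarith [(hebd x).2]⟩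
  have hAZ1 (ω : Ω) : A ω * Z ω = A1 ω * Z ω := by rcases hZ01 ω with h | h <;> simp [hA, h]
  have hAZ0 (ω : Ω) : A ω * (1 - Z ω) = A0 ω * (1 - Z ω) := by
    rcases hZ01 ω with h | h <;> simp [hA, h]
  have hl1A1 : IsCondExpVersion P X A1 l1 :=
    hZe.isCondExpVersion he hl1 hε (fun x => (hebd x).1) hZeA1 fun g hg hgb => by
      simpa only [ite_eq_one_eq_self (hZ01 _), hAZ1] using hl1v g hg hgb
  have hl0A0 : IsCondExpVersion P X A0 l0 :=
    (hZe.one_sub hX hZ hZb he heb measurable_one fun _ => by simp).isCondExpVersion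
      (w := fun x => 1 - e x) (measurable_const.sub he) hl0 hε (fun x => by linarith [(hebd x).2])
      (hZeA0.one_sub hX hZ hZb he heb hA0 hA0b) fun g hg hgb => by
      simpa only [ite_eq_zero_eq_one_sub (hZ01 _), hAZ0] using hl0v g hg hgb
  have hA1I (ω : Ω) := mem_Icc_of_eq_zero_or_eq_one (hA1_01 ω)
  have hA0I (ω : Ω) := mem_Icc_of_eq_zero_or_eq_one (hA0_01 ω)
  rw [integral_sub (hl1A1.integrable_comp hX hl1 hA1 hA1I) (hl0A0.integrable_comp hX hl0 hA0 hA0I),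
    hl1A1.integral_comp_eq hX hl1 hA1 hA1I, hl0A0.integral_comp_eq hX hl0 hA0 hA0I]
  exact integral_sub_eq_measureReal_sub hA0 hA1 hA0_01 hA1_01

/-- Without monotonicity, Δ0 := E[ℓ1(X) − ℓ0(X)] = P(A1 > A0) − P(A1 < A0). -/
theorem stmt_3
    {Ω : Type*} [MeasurableSpace Ω] (P : Measure Ω) [IsProbabilityMeasure P]
    {S : Type*} [mS : MeasurableSpace S]
    (X : Ω → S) (hX : Measurable X)
    (Z A0 A1 Y0 Y1 : Ω → ℝ)
    (hZ : Measurable Z) (hA0 : Measurable A0) (hA1 : Measurable A1)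
    (hY0 : Measurable Y0) (hY1 : Measurable Y1)
    (hZ01 : ∀ ω, Z ω = 0 ∨ Z ω = 1)
    (hA0_01 : ∀ ω, A0 ω = 0 ∨ A0 ω = 1)
    (hA1_01 : ∀ ω, A1 ω = 0 ∨ A1 ω = 1)
    (hY0b : ∃ C, ∀ ω, |Y0 ω| ≤ C) (hY1b : ∃ C, ∀ ω, |Y1 ω| ≤ C)
    (A Y : Ω → ℝ)
    (hA : A = fun ω => (1 - Z ω) * A0 ω + Z ω * A1 ω)
    (hY : Y = fun ω => (1 - A ω) * Y0 ω + A ω * Y1 ω)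
    (e : S → ℝ) (he : Measurable e) (ε : ℝ) (hε : 0 < ε) (hε2 : ε < 1/2)
    (hebd : ∀ x, ε ≤ e x ∧ e x ≤ 1 - ε)
    (hVe : ∀ g : S → ℝ, Measurable g → (∃ C, ∀ x, |g x| ≤ C) →
      ∫ ω, Z ω * g (X ω) ∂P = ∫ ω, e (X ω) * g (X ω) ∂P)
    (hUnconf : ∀ ψ : ℝ × ℝ × ℝ × ℝ → ℝ, Measurable ψ → (∃ C, ∀ v, |ψ v| ≤ C) →
      ∀ g : S → ℝ, Measurable g → (∃ C, ∀ x, |g x| ≤ C) →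
      ∫ ω, Z ω * ψ (A0 ω, A1 ω, Y0 ω, Y1 ω) * g (X ω) ∂P
        = ∫ ω, e (X ω) * ψ (A0 ω, A1 ω, Y0 ω, Y1 ω) * g (X ω) ∂P)
    (l0 l1 : S → ℝ) (hl0 : Measurable l0) (hl1 : Measurable l1)
    (hl0v : ∀ g : S → ℝ, Measurable g → (∃ C, ∀ x, |g x| ≤ C) →
      ∫ ω, A ω * (if Z ω = 0 then (1:ℝ) else 0) * g (X ω) ∂P
        = ∫ ω, l0 (X ω) * (if Z ω = 0 then (1:ℝ) else 0) * g (X ω) ∂P)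
    (hl1v : ∀ g : S → ℝ, Measurable g → (∃ C, ∀ x, |g x| ≤ C) →
      ∫ ω, A ω * (if Z ω = 1 then (1:ℝ) else 0) * g (X ω) ∂P
        = ∫ ω, l1 (X ω) * (if Z ω = 1 then (1:ℝ) else 0) * g (X ω) ∂P) :
    (∫ ω, (l1 (X ω) - l0 (X ω)) ∂P)
      = (P {ω | A1 ω = 1 ∧ A0 ω = 0}).toReal - (P {ω | A1 ω = 0 ∧ A0 ω = 1}).toReal :=
  stmt_3_general P (mS := mS) X hX Z A0 A1 Y0 Y1 hZ hA0 hA1 hZ01 hA0_01 hA1_01 A hA e he ε hε hebd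
    hVe hUnconf l0 l1 hl0 hl1 hl0v hl1v
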